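/- In the cyclotomic Hecke algebra H_n(v̲, q), the elements L_1, …, L_n defined by L_1 = T_0 and L_{k+1} = q⁻¹ T_k L_k T_k pairwise commute. -/
import Mathlib

/-- Core computation: if `s, t` satisfy the braid relation, `A` commutes with `t`,
and `A` commutes with `s*A*s` (the inductive hypothesis), then `s*A*s`
commutes with `t*(s*A*s)*t`. -/
lemma jm_core {H : Type*} [Ring H] (s t A : H)
    (hbr : s * t * s = t * s * t)
    (hAt : A * t = t * A)
    (hIH : A * (s * A * s) = (s * A * s) * A) :
    (s * A * s) * (t * (s * A * s) * t) = (t * (s * A * s) * t) * (s * A * s) := by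
  have br0 : s * (t * s) = t * (s * t) := by
    rw [← mul_assoc, hbr, mul_assoc]
  have br' : ∀ x, s * (t * (s * x)) = t * (s * (t * x)) := fun x => by
    rw [← mul_assoc, ← mul_assoc, hbr, mul_assoc, mul_assoc]
  have At' : ∀ x, A * (t * x) = t * (A * x) := fun x => by
    rw [← mul_assoc, hAt, mul_assoc]
  have tA' : ∀ x, t * (A * x) = A * (t * x) := fun x => (At' x).symm
  have hIHr : A * (s * (A * s)) = s * (A * (s * A)) := by
    simpa only [mul_assoc] using hIH
  have IH' : ∀ x, A * (s * (A * (s * x))) = s * (A * (s * (A * x))) := fun x => by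
    simpa only [mul_assoc] using congrArg (· * x) hIHr
  simp only [mul_assoc]
  conv_lhs => rw [br', tA', At', ← br0, IH']
  conv_rhs => rw [br', tA', At', ← br']

/-- In any ring containing elements `T_0, T_1, …` satisfying the defining
relations of the cyclotomic Hecke algebra `H_n(v̲, q)`, the Jucys–Murphy
elements `L_1 = T_0`, `L_{k+1} = q⁻¹ T_k L_k T_k` pairwise commute. -/
theorem jucys_murphy_commute {R H : Type*} [CommRing R] [Ring H] [Algebra R H]
    (m : ℕ) (q qinv : R) (hq : q * qinv = 1) (v : Fin m → R)
    (T : ℕ → H)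
    (hcyc : (List.ofFn fun i : Fin m => T 0 - algebraMap R H (v i)).prod = 0)
    (hquad : ∀ i : ℕ, 1 ≤ i → (T i - algebraMap R H q) * (T i + 1) = 0)
    (hbraid0 : (T 0 * T 1) ^ 2 = (T 1 * T 0) ^ 2)
    (hbraid : ∀ i : ℕ, 1 ≤ i → T i * T (i + 1) * T i = T (i + 1) * T i * T (i + 1))
    (hfar : ∀ i j : ℕ, i + 2 ≤ j → T i * T j = T j * T i)
    (L : ℕ → H)
    (hL1 : L 1 = T 0)
    (hLk : ∀ k : ℕ, 1 ≤ k → L (k + 1) = algebraMap R H qinv * T k * L k * T k) :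
    ∀ j k : ℕ, 1 ≤ j → 1 ≤ k → L j * L k = L k * L j := by
  have hc : ∀ x : H, Commute (algebraMap R H qinv) x := fun x => Algebra.commutes qinv x
  -- T i commutes with L k whenever i ≥ k + 1
  have far : ∀ k, 1 ≤ k → ∀ i, k + 1 ≤ i → Commute (T i) (L k) := by
    intro k
    induction k with
    | zero => intro h; omega
    | succ n ih =>
      intro _ i hi
      rcases Nat.eq_zero_or_pos n with rfl | hn
      · rw [hL1]
        exact (hfar 0 i (by omega)).symm
      · rw [hLk n hn]
        exact ((((hc (T i)).symm).mul_right (hfar n i (by omega)).symm).mul_right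
          (ih hn i (by omega))).mul_right (hfar n i (by omega)).symm
  -- key relation: L k commutes with T k * L k * T k
  have key : ∀ k, 1 ≤ k → Commute (L k) (T k * L k * T k) := by
    intro k
    induction k with
    | zero => intro h; omega
    | succ n ih =>
      intro _
      rcases Nat.eq_zero_or_pos n with rfl | hn
      · rw [hL1]
        show T 0 * (T 1 * T 0 * T 1) = (T 1 * T 0 * T 1) * T 0
        have h := hbraid0
        simp only [pow_two, mul_assoc] at h ⊢
        exact h
      · rw [hLk n hn]
        set c := algebraMap R H qinv with hcdef
        have hre : c * T n * L n * T n = c * (T n * L n * T n) := by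
          simp only [mul_assoc]
        rw [hre]
        set B := T n * L n * T n with hBdef
        have hcomm : Commute B (T (n+1) * B * T (n+1)) := by
          rw [hBdef]
          exact jm_core (T n) (T (n+1)) (L n) (hbraid n hn)
            ((far n hn (n+1) le_rfl).symm) (ih hn)
        have h2 : T (n+1) * (c * B) * T (n+1) = c * (T (n+1) * B * T (n+1)) := by
          rw [← mul_assoc (T (n+1)) c B, ← (hc (T (n+1))).eq, mul_assoc c,
            mul_assoc c]
        rw [h2]
        exact ((Commute.refl c).mul_left ((hc B).symm)).mul_right
          ((hc _).mul_left hcomm)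
  -- main induction: L j commutes with L (j + d)
  have main : ∀ j, 1 ≤ j → ∀ d, Commute (L j) (L (j + d)) := by
    intro j hj d
    induction d with
    | zero => exact Commute.refl _
    | succ e ih =>
      rcases Nat.eq_zero_or_pos e with rfl | he
      · show Commute (L j) (L (j + 1))
        rw [hLk j hj]
        have hre : algebraMap R H qinv * T j * L j * T j
            = algebraMap R H qinv * (T j * L j * T j) := by
          simp only [mul_assoc]
        rw [hre]
        exact ((hc (L j)).symm).mul_right (key j hj)
      · show Commute (L j) (L (j + e + 1))
        have hje : 1 ≤ j + e := by omega
        rw [hLk (j + e) hje]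
        exact ((((hc (L j)).symm).mul_right
          (far j hj (j + e) (by omega)).symm).mul_right ih).mul_right
          (far j hj (j + e) (by omega)).symm
  intro j k hj hk
  rcases le_total j k with h | h
  · obtain ⟨d, rfl⟩ := Nat.exists_eq_add_of_le h
    exact main j hj d
  · obtain ⟨d, rfl⟩ := Nat.exists_eq_add_of_le h
    exact (main k hk d).symm
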